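/- For n ≥ 1, |S_n| = 3(w_n − 2)² + 2(w_n − 2) − 6(w_n − w_{n−1})(w_n − w_{n−1} − 1). Concretely, |S_{2k+1}| = 42·4^k − 34·2^k + 8 for k ≥ 0, and |S_{2k}| = 21·4^k − 24·2^k + 8 for k ≥ 1. -/

import Mathlib

def w (n : ℕ) : ℕ := if n % 2 = 0 then 3 * 2 ^ (n / 2) else 4 * 2 ^ (n / 2)

def Sset (n : ℕ) : Set GaussianInt :=
  {z | z ≠ 0 ∧ |z.re| ≤ (w n : ℤ) - 2 ∧ |z.im| ≤ (w n : ℤ) - 2 ∧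
    |z.re| + |z.im| ≤ (w (n + 1) : ℤ) - 3 ∧ ¬ (2 : ℤ) ∣ Int.gcd z.re z.im}

/-!
Put `a = w n - 2` and `b = w (n + 1) - 3`. Then `S_n` is the set of lattice points of the octagon
`|x|, |y| ≤ a`, `|x| + |y| ≤ b` whose coordinates are not both even (which already excludes `0`).
For `a ≤ b ≤ 2a` the octagon is the square of side `2a + 1` with four corner triangles of
`m(m + 1)/2` points cut off, `m = 2a - b`: column `x` loses `2 max 0 (|x| - (b - a))` points.
For `n ≥ 1`, `a` is even and `b` is odd, so the even points form the octagon with parameters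
`a/2` and `(b - 1)/2`, and the difference of the two counts is the claimed formula.
-/

open Finset

noncomputable def octagon (a b : ℤ) : Finset (ℤ × ℤ) :=
  (Icc (-a) a ×ˢ Icc (-a) a).filter fun p => |p.1| + |p.2| ≤ b

lemma mem_octagon {a b : ℤ} {p : ℤ × ℤ} :
    p ∈ octagon a b ↔ |p.1| ≤ a ∧ |p.2| ≤ a ∧ |p.1| + |p.2| ≤ b := by
  simp only [octagon, mem_filter, mem_product, mem_Icc, ← abs_le, and_assoc]

lemma sum_Icc_neg_max_abs_sub {d : ℤ} (hd : 0 ≤ d) (n : ℤ) (hn : d ≤ n) :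
    ∑ x ∈ Icc (-n) n, max 0 (|x| - d) = (n - d) * (n - d + 1) := by
  induction n, hn using Int.leInduction with
  | base =>
    rw [sub_self, zero_mul]
    exact sum_eq_zero fun x hx => max_eq_left (by rw [mem_Icc, ← abs_le] at hx; linarith)
  | succ n hdn ih =>
    have hIcc : Icc (-(n + 1)) (n + 1) = insert (-(n + 1)) (insert (n + 1) (Icc (-n) n)) := by
      ext x; simp only [mem_Icc, mem_insert]; omega
    rw [hIcc, sum_insert (by simp; omega), sum_insert (by simp), ih, abs_neg,
      abs_of_nonneg (by linarith), max_eq_right (by linarith)]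
    ring

lemma card_octagon {a b : ℤ} (hab : a ≤ b) (hba : b ≤ 2 * a) :
    (#(octagon a b) : ℤ) = (2 * a + 1) ^ 2 - 2 * (2 * a - b) * (2 * a - b + 1) := by
  have ha : 0 ≤ a := by linarith
  have fibre (x : ℤ) (hx : |x| ≤ a) :
      (#((Icc (-a) a).filter fun y => |x| + |y| ≤ b) : ℤ) =
        2 * a + 1 - 2 * max 0 (|x| - (b - a)) := by
    have hfibre : (Icc (-a) a).filter (fun y => |x| + |y| ≤ b) =
        Icc (-min a (b - |x|)) (min a (b - |x|)) := by
      ext y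
      rw [mem_filter, mem_Icc, mem_Icc, ← abs_le, ← abs_le, le_min_iff]
      constructor <;> rintro ⟨h1, h2⟩ <;> exact ⟨h1, by linarith⟩
    rw [hfibre, Int.card_Icc_of_le _ _ (by omega)]
    omega
  calc (#(octagon a b) : ℤ)
      = ∑ x ∈ Icc (-a) a, (#((Icc (-a) a).filter fun y => |x| + |y| ≤ b) : ℤ) := by
        rw [← Nat.cast_sum, octagon, card_filter, sum_product]
        simp only [card_filter]
    _ = ∑ x ∈ Icc (-a) a, (2 * a + 1 - 2 * max 0 (|x| - (b - a))) :=
        sum_congr rfl fun x hx => fibre x (by rwa [mem_Icc, ← abs_le] at hx)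
    _ = _ := by
        rw [sum_sub_distrib, ← mul_sum, sum_const,
          sum_Icc_neg_max_abs_sub (by linarith) a (by linarith), nsmul_eq_mul,
          Int.card_Icc_of_le _ _ (by linarith)]
        ring

lemma filter_even_octagon (a b : ℤ) :
    (octagon (2 * a) (2 * b + 1)).filter (fun p => 2 ∣ p.1 ∧ 2 ∣ p.2) =
      (octagon a b).image fun p => (2 * p.1, 2 * p.2) := by
  ext ⟨x, y⟩
  simp only [mem_filter, mem_image, mem_octagon, Prod.mk.injEq, Prod.exists, Int.abs_eq_natAbs]
  constructor
  · rintro ⟨h, ⟨s, rfl⟩, ⟨t, rfl⟩⟩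
    exact ⟨s, t, by omega, rfl, rfl⟩
  · rintro ⟨s, t, h, rfl, rfl⟩
    exact ⟨by omega, ⟨s, rfl⟩, ⟨t, rfl⟩⟩

lemma card_filter_not_even_octagon {a b : ℤ} (hab : a ≤ b) (hba : b < 2 * a) :
    (#((octagon (2 * a) (2 * b + 1)).filter fun p => ¬(2 ∣ p.1 ∧ 2 ∣ p.2)) : ℤ) =
      (4 * a + 1) ^ 2 - 2 * (4 * a - 2 * b - 1) * (4 * a - 2 * b) -
        ((2 * a + 1) ^ 2 - 2 * (2 * a - b) * (2 * a - b + 1)) := by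
  have hdouble : Function.Injective fun p : ℤ × ℤ => (2 * p.1, 2 * p.2) := by
    rintro ⟨x, y⟩ ⟨s, t⟩ h
    simp only [Prod.mk.injEq] at h ⊢
    omega
  have hsplit := card_filter_add_card_filter_not (s := octagon (2 * a) (2 * b + 1))
    (p := fun p => 2 ∣ p.1 ∧ 2 ∣ p.2)
  rw [filter_even_octagon, card_image_of_injective _ hdouble] at hsplit
  have hbig := card_octagon (a := 2 * a) (b := 2 * b + 1) (by linarith) (by linarith)
  have hsmall := card_octagon hab hba.le
  rw [← Nat.cast_inj (R := ℤ), Nat.cast_add] at hsplit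
  linear_combination hsplit + hbig - hsmall

lemma Sset_eq_image (n : ℕ) :
    Sset n = (fun p : ℤ × ℤ => (⟨p.1, p.2⟩ : GaussianInt)) ''
      ↑((octagon ((w n : ℤ) - 2) ((w (n + 1) : ℤ) - 3)).filter
        fun p => ¬(2 ∣ p.1 ∧ 2 ∣ p.2)) := by
  ext ⟨x, y⟩
  simp only [Sset, Set.mem_ofPred_eq, Set.mem_image, coe_filter, mem_octagon, Prod.exists,
    Int.dvd_coe_gcd_iff, Zsqrtd.ext_iff]
  constructor
  · rintro ⟨-, hx, hy, hxy, hodd⟩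
    exact ⟨x, y, ⟨⟨hx, hy, hxy⟩, hodd⟩, rfl, rfl⟩
  · rintro ⟨x, y, ⟨⟨hx, hy, hxy⟩, hodd⟩, rfl, rfl⟩
    refine ⟨?_, hx, hy, hxy, hodd⟩
    rintro ⟨rfl, rfl⟩
    exact hodd ⟨dvd_zero 2, dvd_zero 2⟩

lemma w_two_mul (k : ℕ) : w (2 * k) = 3 * 2 ^ k := by
  rw [w, if_pos (by omega), Nat.mul_div_cancel_left k two_pos]

lemma w_two_mul_add_one (k : ℕ) : w (2 * k + 1) = 4 * 2 ^ k := by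
  rw [w, if_neg (by omega), show (2 * k + 1) / 2 = k by omega]

lemma ncard_Sset_of_w_eq {n : ℕ} {a b : ℤ} (ha : (w n : ℤ) = 2 * a + 2)
    (hb : (w (n + 1) : ℤ) = 2 * b + 4) (hab : a ≤ b) (hba : b < 2 * a) :
    ((Sset n).ncard : ℤ) = (4 * a + 1) ^ 2 - 2 * (4 * a - 2 * b - 1) * (4 * a - 2 * b) -
      ((2 * a + 1) ^ 2 - 2 * (2 * a - b) * (2 * a - b + 1)) := by
  have hinj : Function.Injective fun p : ℤ × ℤ => (⟨p.1, p.2⟩ : GaussianInt) :=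
    fun p q h => Prod.ext (congrArg Zsqrtd.re h) (congrArg Zsqrtd.im h)
  rw [Sset_eq_image, Set.ncard_image_of_injective _ hinj, Set.ncard_coe_finset, ha, hb,
    add_sub_cancel_right, show 2 * b + 4 - 3 = 2 * b + 1 by ring]
  exact card_filter_not_even_octagon hab hba

lemma four_pow (k : ℕ) : (4 : ℤ) ^ k = 2 ^ (2 * k) := by
  rw [pow_mul]; norm_num

lemma ncard_Sset_two_mul_add_one (k : ℕ) :
    ((Sset (2 * k + 1)).ncard : ℤ) = 42 * 4 ^ k - 34 * 2 ^ k + 8 := by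
  have hpos : (1 : ℤ) ≤ 2 ^ k := one_le_pow₀ (by norm_num)
  rw [ncard_Sset_of_w_eq (a := 2 * 2 ^ k - 1) (b := 3 * 2 ^ k - 2) ?_ ?_ (by linarith)
    (by linarith), four_pow]
  · ring
  · rw [w_two_mul_add_one]; push_cast; ring
  · rw [show 2 * k + 1 + 1 = 2 * (k + 1) by ring, w_two_mul]; push_cast; ring

lemma ncard_Sset_two_mul (k : ℕ) (hk : 1 ≤ k) :
    ((Sset (2 * k)).ncard : ℤ) = 21 * 4 ^ k - 24 * 2 ^ k + 8 := by
  obtain ⟨j, rfl⟩ : ∃ j, k = j + 1 := ⟨k - 1, by omega⟩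
  have hpos : (1 : ℤ) ≤ 2 ^ j := one_le_pow₀ (by norm_num)
  rw [ncard_Sset_of_w_eq (a := 3 * 2 ^ j - 1) (b := 4 * 2 ^ j - 2) ?_ ?_ (by linarith)
    (by linarith), four_pow]
  · ring
  · rw [w_two_mul]; push_cast; ring
  · rw [w_two_mul_add_one]; push_cast; ring

theorem Sset_card :
    (∀ n : ℕ, 1 ≤ n →
      ((Sset n).ncard : ℤ) =
        3 * ((w n : ℤ) - 2) ^ 2 + 2 * ((w n : ℤ) - 2) -
          6 * ((w n : ℤ) - (w (n - 1) : ℤ)) * ((w n : ℤ) - (w (n - 1) : ℤ) - 1)) ∧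
    (∀ k : ℕ, ((Sset (2 * k + 1)).ncard : ℤ) = 42 * 4 ^ k - 34 * 2 ^ k + 8) ∧
    (∀ k : ℕ, 1 ≤ k → ((Sset (2 * k)).ncard : ℤ) = 21 * 4 ^ k - 24 * 2 ^ k + 8) := by
  refine ⟨fun n hn => ?_, ncard_Sset_two_mul_add_one, ncard_Sset_two_mul⟩
  obtain ⟨k, rfl | rfl⟩ := Nat.even_or_odd' n
  · obtain ⟨j, rfl⟩ : ∃ j, k = j + 1 := ⟨k - 1, by omega⟩
    rw [ncard_Sset_two_mul (j + 1) j.succ_pos, show 2 * (j + 1) - 1 = 2 * j + 1 by omega,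
      w_two_mul, w_two_mul_add_one, four_pow]
    push_cast
    ring
  · rw [ncard_Sset_two_mul_add_one, Nat.add_sub_cancel, w_two_mul, w_two_mul_add_one, four_pow]
    push_cast
    ring
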